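/- Let A be a ring with ideal I and subrings A' ⊇ B' such that A = A' ⊕ I and B = B' ⊕ I as additive groups (where B = B' + I is a subring of A). Then A' is a separable extension of B' if and only if A is a separable extension of B. -/

import Mathlib

/-!
The projection `π : A → A'` along `I` is a ring homomorphism, being `A → A ⧸ I ≃ A'`,
and it maps `B` into `B ∩ A' = B'`; pushing a separability element forward along the
surjection `π` gives one for `A'` over `B'`. Conversely, push a separability element `e` of
`A'` over `B'` into `A ⊗_B A`. It still commutes with `A'`, and it commutes with `I` as well:
for `i ∈ I` both `i * A` and `A * i` lie in `I ⊆ B`, so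
`i • e = 1 ⊗ i μ(e) = 1 ⊗ i = i ⊗ 1 = e • i`. As `A = A' + I`, it commutes with all of `A`.
-/

open scoped TensorProduct

section SepPrelude

variable {A : Type*} [Ring A]

/-- Relations defining `A ⊗_B A` as a quotient of `A ⊗_ℤ A`. -/
def sepRel (B : Subring A) : Submodule ℤ (TensorProduct ℤ A A) :=
  Submodule.span ℤ
    {z | ∃ (x y : A) (b : B), z = (x * (b : A)) ⊗ₜ[ℤ] y - x ⊗ₜ[ℤ] ((b : A) * y)}

/-- The tensor product `A ⊗_B A` of `A` with itself over the subring `B`. -/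
abbrev TensorOverSub (B : Subring A) : Type _ := TensorProduct ℤ A A ⧸ sepRel B

/-- The basic tensor `x ⊗_B y`. -/
noncomputable def tmulB (B : Subring A) (x y : A) : TensorOverSub B :=
  Submodule.Quotient.mk (x ⊗ₜ[ℤ] y)

/-- Left multiplication `a • (x ⊗ y) = (a*x) ⊗ y` on `A ⊗_B A`. -/
noncomputable def lmulB (B : Subring A) (a : A) :
    TensorOverSub B →ₗ[ℤ] TensorOverSub B :=
  Submodule.mapQ _ _ (LinearMap.rTensor A (LinearMap.mulLeft ℤ a)) (by
    refine Submodule.span_le.mpr ?_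
    rintro _ ⟨x, y, b, rfl⟩
    show (LinearMap.rTensor A (LinearMap.mulLeft ℤ a)) ((x * (b : A)) ⊗ₜ[ℤ] y - x ⊗ₜ[ℤ] ((b : A) * y)) ∈ sepRel B
    rw [map_sub, LinearMap.rTensor_tmul, LinearMap.rTensor_tmul, LinearMap.mulLeft_apply,
      LinearMap.mulLeft_apply]
    exact Submodule.subset_span ⟨a * x, y, b, by rw [mul_assoc a x (b : A)]⟩)

/-- Right multiplication `(x ⊗ y) • a = x ⊗ (y*a)` on `A ⊗_B A`. -/
noncomputable def rmulB (B : Subring A) (a : A) :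
    TensorOverSub B →ₗ[ℤ] TensorOverSub B :=
  Submodule.mapQ _ _ (LinearMap.lTensor A (LinearMap.mulRight ℤ a)) (by
    refine Submodule.span_le.mpr ?_
    rintro _ ⟨x, y, b, rfl⟩
    show (LinearMap.lTensor A (LinearMap.mulRight ℤ a)) ((x * (b : A)) ⊗ₜ[ℤ] y - x ⊗ₜ[ℤ] ((b : A) * y)) ∈ sepRel B
    rw [map_sub, LinearMap.lTensor_tmul, LinearMap.lTensor_tmul, LinearMap.mulRight_apply,
      LinearMap.mulRight_apply]
    exact Submodule.subset_span ⟨x, y * a, b, by rw [mul_assoc]⟩)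

/-- The multiplication map `μ : A ⊗_B A → A`. -/
noncomputable def mulMapB (B : Subring A) : TensorOverSub B →ₗ[ℤ] A :=
  Submodule.liftQ _ (LinearMap.mul' ℤ A) (by
    refine Submodule.span_le.mpr ?_
    rintro _ ⟨x, y, b, rfl⟩
    show LinearMap.mul' ℤ A ((x * (b : A)) ⊗ₜ[ℤ] y - x ⊗ₜ[ℤ] ((b : A) * y)) = 0
    rw [map_sub, LinearMap.mul'_apply, LinearMap.mul'_apply, mul_assoc, sub_self])

/-- `A` is a separable extension of `B`: there is a separability element in `A ⊗_B A`. -/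
def IsSepExt (B : Subring A) : Prop :=
  ∃ e : TensorOverSub B, (∀ a : A, lmulB B a e = rmulB B a e) ∧ mulMapB B e = 1

end SepPrelude

section TensorOverSub

variable {A : Type*} [Ring A] (B : Subring A)

lemma TensorOverSub.induction {P : TensorOverSub B → Prop}
    (zero : P 0) (tmul : ∀ x y : A, P (tmulB B x y))
    (add : ∀ s t, P s → P t → P (s + t)) (t : TensorOverSub B) : P t := by
  obtain ⟨z, rfl⟩ := Submodule.Quotient.mk_surjective _ t
  induction z using TensorProduct.induction_on with
  | zero => exact zero
  | tmul x y => exact tmul x y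
  | add s t hs ht => exact add _ _ hs ht

@[simp] lemma tmulB_zero_left (y : A) : tmulB B 0 y = 0 := by
  simp [tmulB]

@[simp] lemma tmulB_zero_right (x : A) : tmulB B x 0 = 0 := by
  simp [tmulB]

@[simp] lemma tmulB_add_left (x x' y : A) :
    tmulB B (x + x') y = tmulB B x y + tmulB B x' y := by
  simp [tmulB, TensorProduct.add_tmul]

@[simp] lemma tmulB_add_right (x y y' : A) :
    tmulB B x (y + y') = tmulB B x y + tmulB B x y' := by
  simp [tmulB, TensorProduct.tmul_add]

@[simp] lemma lmulB_tmulB (a x y : A) : lmulB B a (tmulB B x y) = tmulB B (a * x) y := rfl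

@[simp] lemma rmulB_tmulB (a x y : A) : rmulB B a (tmulB B x y) = tmulB B x (y * a) := rfl

@[simp] lemma mulMapB_tmulB (x y : A) : mulMapB B (tmulB B x y) = x * y := rfl

lemma tmulB_mul_left_eq (x y : A) (b : B) : tmulB B (x * b) y = tmulB B x (b * y) := by
  rw [tmulB, tmulB, Submodule.Quotient.eq]
  exact Submodule.subset_span ⟨x, y, b, rfl⟩

lemma lmulB_add (a a' : A) (t : TensorOverSub B) :
    lmulB B (a + a') t = lmulB B a t + lmulB B a' t := by
  induction t using TensorOverSub.induction with
  | zero => simp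
  | tmul x y => simp [add_mul]
  | add s t hs ht => simp only [map_add, hs, ht]; abel

lemma rmulB_add (a a' : A) (t : TensorOverSub B) :
    rmulB B (a + a') t = rmulB B a t + rmulB B a' t := by
  induction t using TensorOverSub.induction with
  | zero => simp
  | tmul x y => simp [mul_add]
  | add s t hs ht => simp only [map_add, hs, ht]; abel

variable {B} {i : A}

lemma lmulB_eq_tmulB_one (hi : ∀ y, i * y ∈ B) (t : TensorOverSub B) :
    lmulB B i t = tmulB B 1 (i * mulMapB B t) := by
  induction t using TensorOverSub.induction with
  | zero => simp
  | tmul x y =>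
    simpa [mul_assoc] using tmulB_mul_left_eq B 1 y ⟨i * x, hi x⟩
  | add s t hs ht => simp [hs, ht, mul_add]

lemma rmulB_eq_tmulB_one (hi : ∀ y, y * i ∈ B) (t : TensorOverSub B) :
    rmulB B i t = tmulB B (mulMapB B t * i) 1 := by
  induction t using TensorOverSub.induction with
  | zero => simp
  | tmul x y =>
    simpa [mul_assoc] using (tmulB_mul_left_eq B x 1 ⟨y * i, hi y⟩).symm
  | add s t hs ht => simp [hs, ht, add_mul]

lemma lmulB_eq_rmulB_of_mulMapB_eq_one (hl : ∀ y, i * y ∈ B) (hr : ∀ y, y * i ∈ B)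
    {e : TensorOverSub B} (he : mulMapB B e = 1) : lmulB B i e = rmulB B i e := by
  rw [lmulB_eq_tmulB_one hl, rmulB_eq_tmulB_one hr, he, mul_one, one_mul]
  simpa using (tmulB_mul_left_eq B 1 1 ⟨i, by simpa using hl 1⟩).symm

end TensorOverSub

section Functoriality

variable {A₁ A₂ : Type*} [Ring A₁] [Ring A₂] {B₁ : Subring A₁} {B₂ : Subring A₂}
  (f : A₁ →+* A₂) (hf : ∀ b ∈ B₁, f b ∈ B₂)

noncomputable def sepMap : TensorOverSub B₁ →ₗ[ℤ] TensorOverSub B₂ :=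
  Submodule.mapQ _ _ (TensorProduct.map f.toIntAlgHom.toLinearMap f.toIntAlgHom.toLinearMap) (by
    refine Submodule.span_le.mpr ?_
    rintro _ ⟨x, y, b, rfl⟩
    refine Submodule.subset_span ⟨f x, f y, ⟨f b, hf b b.2⟩, ?_⟩
    -- `erw`: this `TensorProduct.map` is linear for `Algebra.toModule`, while `sepRel` lives
    -- over `AddCommGroup.toIntModule`
    erw [map_sub, TensorProduct.map_tmul, TensorProduct.map_tmul]
    simp)

@[simp] lemma sepMap_tmulB (x y : A₁) :
    sepMap f hf (tmulB B₁ x y) = tmulB B₂ (f x) (f y) := rfl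

lemma mulMapB_sepMap (t : TensorOverSub B₁) :
    mulMapB B₂ (sepMap f hf t) = f (mulMapB B₁ t) := by
  induction t using TensorOverSub.induction with
  | zero => simp
  | tmul x y => simp
  | add s t hs ht => simp [hs, ht]

lemma lmulB_sepMap (a : A₁) (t : TensorOverSub B₁) :
    lmulB B₂ (f a) (sepMap f hf t) = sepMap f hf (lmulB B₁ a t) := by
  induction t using TensorOverSub.induction with
  | zero => simp
  | tmul x y => simp
  | add s t hs ht => simp [hs, ht]

lemma rmulB_sepMap (a : A₁) (t : TensorOverSub B₁) :
    rmulB B₂ (f a) (sepMap f hf t) = sepMap f hf (rmulB B₁ a t) := by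
  induction t using TensorOverSub.induction with
  | zero => simp
  | tmul x y => simp
  | add s t hs ht => simp [hs, ht]

end Functoriality

namespace IsSepExt

variable {A₁ A₂ : Type*} [Ring A₁] [Ring A₂] {B₁ : Subring A₁} {B₂ : Subring A₂}
  (f : A₁ →+* A₂)

theorem map (hf : ∀ b ∈ B₁, f b ∈ B₂)
    (hcover : ∀ a, ∃ x, ∀ y, (a - f x) * y ∈ B₂ ∧ y * (a - f x) ∈ B₂)
    (h : IsSepExt B₁) : IsSepExt B₂ := by
  obtain ⟨e, he_comm, he_one⟩ := h
  have hμ : mulMapB B₂ (sepMap f hf e) = 1 := by rw [mulMapB_sepMap, he_one, map_one]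
  refine ⟨sepMap f hf e, fun a ↦ ?_, hμ⟩
  obtain ⟨x, hx⟩ := hcover a
  rw [← add_sub_cancel (f x) a, lmulB_add, rmulB_add, lmulB_sepMap, rmulB_sepMap, he_comm,
    lmulB_eq_rmulB_of_mulMapB_eq_one (fun y ↦ (hx y).1) (fun y ↦ (hx y).2) hμ]

theorem of_surjective (hf : ∀ b ∈ B₁, f b ∈ B₂) (hsurj : Function.Surjective f)
    (h : IsSepExt B₁) : IsSepExt B₂ :=
  h.map f hf fun a ↦ (hsurj a).imp fun x hx y ↦ by simp [hx, B₂.zero_mem]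

end IsSepExt

namespace Subring

variable {A : Type*} [Ring A] (A' : Subring A) (I : Ideal A) [I.IsTwoSided]

theorem bijective_quotientMk_comp_subtype (h : IsCompl A'.toAddSubgroup I.toAddSubgroup) :
    Function.Bijective ((Ideal.Quotient.mk I).comp A'.subtype) := by
  refine ⟨(injective_iff_map_eq_zero _).mpr fun x hx ↦ ?_, fun q ↦ ?_⟩
  · have hxI : (x : A) ∈ A'.toAddSubgroup ⊓ I.toAddSubgroup :=
      ⟨x.2, Ideal.Quotient.eq_zero_iff_mem.mp hx⟩
    rw [h.inf_eq_bot, AddSubgroup.mem_bot] at hxI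
    exact Subtype.ext hxI
  · obtain ⟨a, rfl⟩ := Ideal.Quotient.mk_surjective q
    have ha : a ∈ A'.toAddSubgroup ⊔ I.toAddSubgroup := h.sup_eq_top ▸ AddSubgroup.mem_top a
    obtain ⟨x, hx, i, hi, rfl⟩ := AddSubgroup.mem_sup.mp ha
    refine ⟨⟨x, hx⟩, ?_⟩
    simpa [Ideal.Quotient.eq_zero_iff_mem] using hi

variable (h : IsCompl A'.toAddSubgroup I.toAddSubgroup)

noncomputable def projOfIsCompl : A →+* A' :=
  (RingEquiv.ofBijective _ (A'.bijective_quotientMk_comp_subtype I h)).symm.toRingHom.comp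
    (Ideal.Quotient.mk I)

theorem projOfIsCompl_coe (x : A') : A'.projOfIsCompl I h x = x :=
  (RingEquiv.ofBijective _ (A'.bijective_quotientMk_comp_subtype I h)).symm_apply_apply x

theorem sub_projOfIsCompl_mem (a : A) : a - A'.projOfIsCompl I h a ∈ I := by
  rw [← Ideal.Quotient.eq]
  exact ((RingEquiv.ofBijective _ (A'.bijective_quotientMk_comp_subtype I h)).apply_symm_apply
    (Ideal.Quotient.mk I a)).symm

end Subring

theorem separable_ideal_complement_general {A : Type*} [Ring A] (I : Ideal A)
    (hI : ∀ x ∈ I, ∀ a : A, x * a ∈ I)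
    (A' B' B : Subring A)
    (hB'B : B' ≤ B)
    (hIB : (I : Set A) ⊆ (B : Set A))
    (hBcap : B' = B ⊓ A')
    (hAsum : A'.toAddSubgroup ⊔ I.toAddSubgroup = ⊤)
    (hAdisj : A'.toAddSubgroup ⊓ I.toAddSubgroup = ⊥) :
    IsSepExt (B'.comap A'.subtype) ↔ IsSepExt B := by
  have : I.IsTwoSided := ⟨fun a hx ↦ hI _ hx a⟩
  have hcompl : IsCompl A'.toAddSubgroup I.toAddSubgroup :=
    ⟨disjoint_iff.mpr hAdisj, codisjoint_iff.mpr hAsum⟩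
  set π := A'.projOfIsCompl I hcompl
  have hπ_mem : ∀ b ∈ B, π b ∈ B'.comap A'.subtype := fun b hb ↦ by
    rw [Subring.mem_comap, hBcap]
    refine ⟨?_, (π b).2⟩
    simpa using B.sub_mem hb (hIB (A'.sub_projOfIsCompl_mem I hcompl b))
  constructor
  · refine IsSepExt.map A'.subtype (fun b hb ↦ hB'B hb) fun a ↦ ⟨π a, fun y ↦ ?_⟩
    have hi := A'.sub_projOfIsCompl_mem I hcompl a
    exact ⟨hIB (hI _ hi y), hIB (I.mul_mem_left y hi)⟩
  · exact IsSepExt.of_surjective π hπ_mem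
      fun x ↦ ⟨x, A'.projOfIsCompl_coe I hcompl x⟩

/-- If `A = A' ⊕ I` and `B = B' ⊕ I` (internal direct sums of additive
groups) where `I` is a two-sided ideal of `A` contained in `B`, `A' ⊇ B'` are
subrings and `B' = B ∩ A'`, then `A'` is separable over `B'` iff `A` is separable
over `B`. -/
theorem separable_ideal_complement {A : Type*} [Ring A] (I : Ideal A)
    (hI : ∀ x ∈ I, ∀ a : A, x * a ∈ I)
    (A' B' B : Subring A)
    (hB'A' : B' ≤ A')
    (hB'B : B' ≤ B)
    (hIB : (I : Set A) ⊆ (B : Set A))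
    (hBcap : B' = B ⊓ A')
    (hAsum : A'.toAddSubgroup ⊔ I.toAddSubgroup = ⊤)
    (hAdisj : A'.toAddSubgroup ⊓ I.toAddSubgroup = ⊥)
    (hBsum : B'.toAddSubgroup ⊔ I.toAddSubgroup = B.toAddSubgroup)
    (hBdisj : B'.toAddSubgroup ⊓ I.toAddSubgroup = ⊥) :
    IsSepExt (B'.comap A'.subtype) ↔ IsSepExt B :=
  separable_ideal_complement_general I hI A' B' B hB'B hIB hBcap hAsum hAdisj
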